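/- Let n ≥ 3, k ≥ 1, ε > 0, and L_k as above with α_k := (-(n-1)+sqrt((n-1)^2+4k(k+n-3)))/2. If V ∈ C^2((0,1)) is bounded on (0,1), satisfies L_k V = 0 on (0,1), then |V(r)| ≤ r^{α_k} |V(1⁻)| for all r ∈ (0,1), where V(1⁻) denotes the limit of V at 1 (assumed to exist). -/

import Mathlib

set_option maxHeartbeats 1000000
open Set Filter Real Topology

noncomputable def alphak (n k : ℕ) : ℝ :=
  (-((n : ℝ) - 1) + Real.sqrt (((n : ℝ) - 1) ^ 2 + 4 * (k : ℝ) * ((k : ℝ) + (n : ℝ) - 3))) / 2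

noncomputable def Lk (n k : ℕ) (ε : ℝ) (V : ℝ → ℝ) (r : ℝ) : ℝ :=
  deriv (deriv V) r + (((n : ℝ) - 2) / r + 2 * r / (ε + r ^ 2)) * deriv V r
    - (k : ℝ) * ((k : ℝ) + (n : ℝ) - 3) / r ^ 2 * V r

lemma second_deriv_test {f : ℝ → ℝ} {x : ℝ} {s : Set ℝ} (hs : IsOpen s) (hx : x ∈ s)
    (hf : ContDiffOn ℝ 2 f s) (hmax : IsLocalMax f x) :
    deriv (deriv f) x ≤ 0 := by
  by_contra h
  push_neg at h
  have hf1 : ContDiffOn ℝ 1 (deriv f) s := hf.deriv_of_isOpen hs (by norm_num)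
  have hfd : DifferentiableAt ℝ (deriv f) x :=
    (hf1.differentiableOn one_ne_zero).differentiableAt (hs.mem_nhds hx)
  have h0 : deriv f x = 0 := hmax.deriv_eq_zero
  have hslope : Tendsto (slope (deriv f) x) (𝓝[≠] x) (𝓝 (deriv (deriv f) x)) :=
    hasDerivAt_iff_tendsto_slope.1 hfd.hasDerivAt
  have hpos : ∀ᶠ y in 𝓝[>] x, 0 < deriv f y := by
    have h1 : ∀ᶠ y in 𝓝[≠] x, 0 < slope (deriv f) x y :=
      hslope.eventually (eventually_gt_nhds h)
    have h2 : ∀ᶠ y in 𝓝[>] x, 0 < slope (deriv f) x y :=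
      h1.filter_mono (nhdsWithin_mono x fun y hy => ne_of_gt hy)
    filter_upwards [h2, self_mem_nhdsWithin] with y hy hxy
    have hxy' : 0 < y - x := sub_pos.2 hxy
    rw [slope_def_field, div_pos_iff] at hy
    rcases hy with ⟨h1, _⟩ | ⟨_, h2⟩
    · linarith [h0]
    · linarith
  have hmem : ∀ᶠ y in 𝓝[>] x, y ∈ s :=
    eventually_nhdsWithin_of_eventually_nhds (hs.eventually_mem hx)
  obtain ⟨b, hbx, hb⟩ := mem_nhdsGT_iff_exists_Ioc_subset.1 (hpos.and hmem)
  have hmax2 : ∀ᶠ y in 𝓝[>] x, f y ≤ f x := hmax.filter_mono nhdsWithin_le_nhds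
  obtain ⟨c, hcx, hc⟩ := mem_nhdsGT_iff_exists_Ioc_subset.1 hmax2
  set d := min b c with hd
  have hdx : x < d := lt_min hbx hcx
  have hsubs : Icc x d ⊆ s := by
    intro y hy
    rcases eq_or_lt_of_le hy.1 with rfl | hlt
    · exact hx
    · exact (hb ⟨hlt, hy.2.trans (min_le_left _ _)⟩).2
  have hmono : StrictMonoOn f (Icc x d) := by
    apply strictMonoOn_of_deriv_pos (convex_Icc x d)
    · exact hf.continuousOn.mono hsubs
    · intro y hy
      rw [interior_Icc] at hy
      exact (hb ⟨hy.1, hy.2.le.trans (min_le_left _ _)⟩).1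
  have h1 : f x < f d := hmono (left_mem_Icc.2 hdx.le) (right_mem_Icc.2 hdx.le) hdx
  have h2 : f d ≤ f x := hc ⟨hdx, min_le_right _ _⟩
  linarith

lemma two_rpow_hasDeriv (a b β γ : ℝ) {r : ℝ} (hr : 0 < r) :
    HasDerivAt (fun x : ℝ => a * x ^ β + b * x ^ γ)
      (a * (β * r ^ (β - 1)) + b * (γ * r ^ (γ - 1))) r :=
  ((Real.hasDerivAt_rpow_const (Or.inl hr.ne')).const_mul a).add
    ((Real.hasDerivAt_rpow_const (Or.inl hr.ne')).const_mul b)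

lemma two_rpow_deriv (a b β γ : ℝ) {r : ℝ} (hr : 0 < r) :
    deriv (fun x : ℝ => a * x ^ β + b * x ^ γ) r
      = a * β * r ^ (β - 1) + b * γ * r ^ (γ - 1) := by
  rw [(two_rpow_hasDeriv a b β γ hr).deriv]; ring

lemma two_rpow_deriv_eventuallyEq (a b β γ : ℝ) {r : ℝ} (hr : 0 < r) :
    deriv (fun x : ℝ => a * x ^ β + b * x ^ γ)
      =ᶠ[𝓝 r] fun x : ℝ => (a * β) * x ^ (β - 1) + (b * γ) * x ^ (γ - 1) := by
  filter_upwards [isOpen_Ioi.mem_nhds hr] with x hx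
  exact two_rpow_deriv a b β γ hx

lemma two_rpow_hasDeriv_deriv (a b β γ : ℝ) {r : ℝ} (hr : 0 < r) :
    HasDerivAt (deriv (fun x : ℝ => a * x ^ β + b * x ^ γ))
      ((a * β) * ((β - 1) * r ^ (β - 2)) + (b * γ) * ((γ - 1) * r ^ (γ - 2))) r := by
  have h := two_rpow_hasDeriv (a * β) (b * γ) (β - 1) (γ - 1) hr
  have h2 : β - 1 - 1 = β - 2 := by ring
  have h3 : γ - 1 - 1 = γ - 2 := by ring
  rw [h2, h3] at h
  exact h.congr_of_eventuallyEq (two_rpow_deriv_eventuallyEq a b β γ hr)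

lemma two_rpow_deriv2 (a b β γ : ℝ) {r : ℝ} (hr : 0 < r) :
    deriv (deriv (fun x : ℝ => a * x ^ β + b * x ^ γ)) r
      = (a * β) * ((β - 1) * r ^ (β - 2)) + (b * γ) * ((γ - 1) * r ^ (γ - 2)) :=
  (two_rpow_hasDeriv_deriv a b β γ hr).deriv

lemma alphak_nonneg (n k : ℕ) (hn : 3 ≤ n) (hk : 1 ≤ k) : 0 ≤ alphak n k := by
  have hn' : (3:ℝ) ≤ n := by exact_mod_cast hn
  have hk' : (1:ℝ) ≤ k := by exact_mod_cast hk
  have h1 : ((n:ℝ) - 1) ^ 2 ≤ ((n:ℝ) - 1) ^ 2 + 4 * (k:ℝ) * ((k:ℝ) + (n:ℝ) - 3) := by nlinarith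
  have h2 : (n:ℝ) - 1 ≤ Real.sqrt (((n:ℝ) - 1) ^ 2 + 4 * (k:ℝ) * ((k:ℝ) + (n:ℝ) - 3)) := by
    calc (n:ℝ) - 1 = Real.sqrt (((n:ℝ) - 1) ^ 2) := by
          rw [Real.sqrt_sq (by linarith)]
      _ ≤ _ := Real.sqrt_le_sqrt h1
  unfold alphak; linarith

lemma alphak_quadratic (n k : ℕ) (hn : 3 ≤ n) (hk : 1 ≤ k) :
    (alphak n k) ^ 2 + ((n:ℝ) - 1) * alphak n k = (k:ℝ) * ((k:ℝ) + (n:ℝ) - 3) := by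
  have hn' : (3:ℝ) ≤ n := by exact_mod_cast hn
  have hk' : (1:ℝ) ≤ k := by exact_mod_cast hk
  have hD : (0:ℝ) ≤ ((n:ℝ) - 1) ^ 2 + 4 * (k:ℝ) * ((k:ℝ) + (n:ℝ) - 3) := by nlinarith
  have hs := Real.sq_sqrt hD
  unfold alphak
  nlinarith [hs]

lemma Lk_phi_nonpos (n k : ℕ) (hn : 3 ≤ n) (hk : 1 ≤ k) {ε : ℝ} (hε : 0 < ε)
    (a b : ℝ) (ha : 0 ≤ a) (hb : 0 ≤ b) {r : ℝ} (hr : 0 < r) :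
    Lk n k ε (fun x : ℝ => a * x ^ alphak n k + b * x ^ (-1:ℝ)) r ≤ 0 := by
  set α := alphak n k with hα
  have hn' : (3:ℝ) ≤ n := by exact_mod_cast hn
  have hk' : (1:ℝ) ≤ k := by exact_mod_cast hk
  set K : ℝ := (k:ℝ) * ((k:ℝ) + (n:ℝ) - 3) with hKdef
  have hK : (1:ℝ) ≤ K := by rw [hKdef]; nlinarith
  have hα0 : 0 ≤ α := alphak_nonneg n k hn hk
  have hαq : α ^ 2 + ((n:ℝ) - 1) * α = K := alphak_quadratic n k hn hk
  have hA : (0:ℝ) < r ^ α := Real.rpow_pos_of_pos hr α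
  have e1 : r ^ (α - 1) = r ^ α / r := by
    rw [Real.rpow_sub hr, Real.rpow_one]
  have e2 : r ^ (α - 2) = r ^ α / r ^ 2 := by
    rw [Real.rpow_sub hr, show (2:ℝ) = ((2:ℕ):ℝ) by norm_num, Real.rpow_natCast]
  have em1 : r ^ (-1:ℝ) = 1 / r := by
    rw [Real.rpow_neg hr.le, Real.rpow_one, one_div]
  have em2 : r ^ ((-1:ℝ) - 1) = 1 / r ^ 2 := by
    rw [show (-1:ℝ) - 1 = -((2:ℕ):ℝ) by norm_num, Real.rpow_neg hr.le, Real.rpow_natCast,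
      one_div]
  have em3 : r ^ ((-1:ℝ) - 2) = 1 / r ^ 3 := by
    rw [show (-1:ℝ) - 2 = -((3:ℕ):ℝ) by norm_num, Real.rpow_neg hr.le, Real.rpow_natCast,
      one_div]
  have hεr : 0 < ε + r ^ 2 := by positivity
  rw [show Lk n k ε (fun x : ℝ => a * x ^ α + b * x ^ (-1:ℝ)) r
      = deriv (deriv (fun x : ℝ => a * x ^ α + b * x ^ (-1:ℝ))) r
        + (((n:ℝ) - 2) / r + 2 * r / (ε + r ^ 2))
          * deriv (fun x : ℝ => a * x ^ α + b * x ^ (-1:ℝ)) r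
        - K / r ^ 2 * (a * r ^ α + b * r ^ (-1:ℝ)) from rfl,
    two_rpow_deriv a b α (-1) hr, two_rpow_deriv2 a b α (-1) hr, e1, e2, em1, em2, em3]
  have key : a * α * ((α - 1) * (r ^ α / r ^ 2)) + b * (-1) * (((-1:ℝ) - 1) * (1 / r ^ 3))
        + (((n:ℝ) - 2) / r + 2 * r / (ε + r ^ 2))
          * (a * α * (r ^ α / r) + b * (-1) * (1 / r ^ 2))
        - K / r ^ 2 * (a * r ^ α + b * (1 / r))
      = (a * (r ^ α) * r * ((α ^ 2 + ((n:ℝ) - 3) * α - K) * (ε + r ^ 2) + 2 * α * r ^ 2)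
          + b * ((4 - (n:ℝ) - K) * (ε + r ^ 2) - 2 * r ^ 2))
        / (r ^ 3 * (ε + r ^ 2)) := by
    field_simp
    ring
  rw [key]
  apply div_nonpos_of_nonpos_of_nonneg _ (by positivity)
  have h1 : α ^ 2 + ((n:ℝ) - 3) * α - K = -(2 * α) := by linarith
  rw [h1]
  have hterm1 : a * (r ^ α) * r * (-(2 * α) * (ε + r ^ 2) + 2 * α * r ^ 2) ≤ 0 := by
    have he : -(2 * α) * (ε + r ^ 2) + 2 * α * r ^ 2 = -(2 * α * ε) := by ring
    rw [he]
    have h2 : 0 ≤ 2 * α * ε := by positivity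
    have h3 : 0 ≤ a * (r ^ α) * r := by positivity
    have := mul_nonneg h3 h2
    linarith
  have hterm2 : b * ((4 - (n:ℝ) - K) * (ε + r ^ 2) - 2 * r ^ 2) ≤ 0 := by
    have h4 : 4 - (n:ℝ) - K ≤ 0 := by linarith
    apply mul_nonpos_of_nonneg_of_nonpos hb
    have h5 := mul_nonpos_of_nonpos_of_nonneg h4 hεr.le
    nlinarith [sq_nonneg r]
  linarith

lemma one_sided (n k : ℕ) (hn : 3 ≤ n) (hk : 1 ≤ k) {ε : ℝ} (hε : 0 < ε)
    (V : ℝ → ℝ) (hV2 : ContDiffOn ℝ 2 V (Set.Ioo 0 1))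
    (M : ℝ) (hM : ∀ r ∈ Set.Ioo (0:ℝ) 1, |V r| ≤ M)
    (hLk : ∀ r ∈ Set.Ioo (0:ℝ) 1, Lk n k ε V r = 0)
    (l : ℝ) (hlim : Filter.Tendsto V (nhdsWithin 1 (Set.Iio 1)) (nhds l))
    (δ : ℝ) (hδ : 0 < δ) :
    ∀ r ∈ Set.Ioo (0:ℝ) 1, V r ≤ |l| * r ^ alphak n k + δ * r ^ (-1:ℝ) := by
  set α := alphak n k with hαdef
  have hα0 : 0 ≤ α := alphak_nonneg n k hn hk
  set φ : ℝ → ℝ := fun x => |l| * x ^ α + δ * x ^ (-1:ℝ) with hφdef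
  set u : ℝ → ℝ := fun x => V x - φ x with hudef
  by_contra hcon
  push_neg at hcon
  obtain ⟨r₁, hr₁, hr₁gt⟩ := hcon
  have hu₁ : 0 < u r₁ := by simp only [hudef, hφdef]; linarith
  have hM0 : 0 ≤ M := le_trans (abs_nonneg _) (hM (1/2) (by norm_num))
  -- φ is C² on Ioo 0 1
  have hφC2 : ContDiffOn ℝ 2 φ (Set.Ioo 0 1) := by
    intro x hx
    have h1 : ContDiffAt ℝ 2 (fun x : ℝ => x ^ α) x :=
      Real.contDiffAt_rpow_const_of_ne (p := α) hx.1.ne'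
    have h2 : ContDiffAt ℝ 2 (fun x : ℝ => x ^ (-1:ℝ)) x :=
      Real.contDiffAt_rpow_const_of_ne (p := (-1:ℝ)) hx.1.ne'
    exact (((contDiffAt_const (c := |l|)).mul h1).add
      ((contDiffAt_const (c := δ)).mul h2)).contDiffWithinAt
  have huC2 : ContDiffOn ℝ 2 u (Set.Ioo 0 1) := hV2.sub hφC2
  -- choose a near 0
  set a : ℝ := min (r₁/2) (δ/(M+1)) with hadef
  have ha0 : 0 < a := lt_min (by linarith [hr₁.1]) (by positivity)
  have har₁ : a < r₁ := lt_of_le_of_lt (min_le_left _ _) (by linarith [hr₁.1])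
  have ha1 : a < 1 := har₁.trans hr₁.2
  have hua : u a < 0 := by
    have hVa : V a ≤ M := le_trans (le_abs_self _) (hM a ⟨ha0, ha1⟩)
    have h1 : 0 ≤ |l| * a ^ α := by positivity
    have h2 : M + 1 ≤ δ * a ^ (-1:ℝ) := by
      have e : a ^ (-1:ℝ) = a⁻¹ := by
        rw [Real.rpow_neg ha0.le, Real.rpow_one]
      rw [e]
      have h3 : a * (M+1) ≤ δ := by
        have := min_le_right (r₁/2) (δ/(M+1))
        rw [← hadef] at this
        calc a * (M+1) ≤ (δ/(M+1)) * (M+1) := by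
              apply mul_le_mul_of_nonneg_right this (by linarith)
          _ = δ := by field_simp
      rw [← div_eq_mul_inv, le_div_iff₀ ha0]
      nlinarith [h3]
    simp only [hudef, hφdef]
    linarith
  -- choose b near 1
  have hφcont1 : Filter.Tendsto φ (nhdsWithin 1 (Set.Iio 1)) (nhds (|l| + δ)) := by
    have h1 : ContinuousAt φ 1 := by
      have h2 : ContinuousAt (fun x : ℝ => x ^ α) 1 :=
        Real.continuousAt_rpow_const 1 α (Or.inl one_ne_zero)
      have h3 : ContinuousAt (fun x : ℝ => x ^ (-1:ℝ)) 1 :=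
        Real.continuousAt_rpow_const 1 (-1) (Or.inl one_ne_zero)
      exact (continuousAt_const.mul h2).add (continuousAt_const.mul h3)
    have h5 : Filter.Tendsto φ (nhdsWithin 1 (Set.Iio 1)) (nhds (φ 1)) :=
      h1.continuousWithinAt (s := Set.Iio 1)
    have h4 : φ 1 = |l| + δ := by
      simp [hφdef, Real.one_rpow]
    rwa [h4] at h5
  have hulim : Filter.Tendsto u (nhdsWithin 1 (Set.Iio 1)) (nhds (l - (|l| + δ))) :=
    hlim.sub hφcont1
  have hubneg : ∀ᶠ x in nhdsWithin 1 (Set.Iio 1), u x < 0 := by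
    apply hulim.eventually_lt_const
    have := le_abs_self l
    linarith
  have hbmem : ∀ᶠ x in nhdsWithin 1 (Set.Iio 1), x ∈ Set.Ioo r₁ 1 :=
    Filter.eventually_of_mem (Ioo_mem_nhdsLT_of_mem ⟨hr₁.2, le_refl 1⟩) (fun x hx => hx)
  obtain ⟨b, hub, hbIoo⟩ := (hubneg.and hbmem).exists
  have hab : a < b := har₁.trans hbIoo.1
  have hIccsub : Set.Icc a b ⊆ Set.Ioo 0 1 := fun x hx => ⟨ha0.trans_le hx.1, lt_of_le_of_lt hx.2 hbIoo.2⟩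
  -- maximum on [a,b]
  have hucont : ContinuousOn u (Set.Icc a b) := (huC2.continuousOn).mono hIccsub
  obtain ⟨r₀, hr₀mem, hr₀max⟩ := isCompact_Icc.exists_isMaxOn (Set.nonempty_Icc.2 hab.le) hucont
  have hr₁Icc : r₁ ∈ Set.Icc a b := ⟨har₁.le, hbIoo.1.le⟩
  have hur₀ : 0 < u r₀ := lt_of_lt_of_le hu₁ (hr₀max hr₁Icc)
  have hr₀a : a < r₀ := by
    rcases eq_or_lt_of_le hr₀mem.1 with h | h
    · exfalso; rw [h] at hua; linarith
    · exact h
  have hr₀b : r₀ < b := by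
    rcases eq_or_lt_of_le hr₀mem.2 with h | h
    · exfalso; rw [h] at hur₀; linarith
    · exact h
  have hr₀Ioo : r₀ ∈ Set.Ioo (0:ℝ) 1 := hIccsub hr₀mem
  have hr₀pos : 0 < r₀ := hr₀Ioo.1
  have hlocmax : IsLocalMax u r₀ :=
    hr₀max.isLocalMax (Icc_mem_nhds hr₀a hr₀b)
  -- derivative facts
  have hVd : ∀ x ∈ Set.Ioo (0:ℝ) 1, DifferentiableAt ℝ V x := fun x hx =>
    ((hV2.differentiableOn two_ne_zero).differentiableAt (isOpen_Ioo.mem_nhds hx))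
  have hφderiv : ∀ x ∈ Set.Ioo (0:ℝ) 1, HasDerivAt φ
      (|l| * (α * x ^ (α - 1)) + δ * ((-1) * x ^ ((-1:ℝ) - 1))) x := fun x hx =>
    two_rpow_hasDeriv |l| δ α (-1) hx.1
  have huderiv : ∀ x ∈ Set.Ioo (0:ℝ) 1, deriv u x = deriv V x - deriv φ x := fun x hx =>
    deriv_sub (hVd x hx) (hφderiv x hx).differentiableAt
  have hderiv_u_r₀ : deriv u r₀ = 0 := hlocmax.deriv_eq_zero
  have hderiv2_u_r₀ : deriv (deriv u) r₀ ≤ 0 :=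
    second_deriv_test isOpen_Ioo hr₀Ioo huC2 hlocmax
  -- second derivatives split
  have hV1 : ContDiffOn ℝ 1 (deriv V) (Set.Ioo 0 1) := hV2.deriv_of_isOpen isOpen_Ioo (by norm_num)
  have hVd2 : DifferentiableAt ℝ (deriv V) r₀ :=
    (hV1.differentiableOn one_ne_zero).differentiableAt (isOpen_Ioo.mem_nhds hr₀Ioo)
  have hφd2 : HasDerivAt (deriv φ)
      ((|l| * α) * ((α - 1) * r₀ ^ (α - 2)) + (δ * (-1)) * (((-1:ℝ) - 1) * r₀ ^ ((-1:ℝ) - 2))) r₀ :=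
    two_rpow_hasDeriv_deriv |l| δ α (-1) hr₀pos
  have huev : deriv u =ᶠ[nhds r₀] fun x => deriv V x - deriv φ x := by
    filter_upwards [isOpen_Ioo.mem_nhds hr₀Ioo] with x hx
    exact huderiv x hx
  have hderiv2_split : deriv (deriv u) r₀ = deriv (deriv V) r₀ - deriv (deriv φ) r₀ := by
    rw [huev.deriv_eq]
    exact deriv_sub hVd2 hφd2.differentiableAt
  -- assemble contradiction
  have hLkV := hLk r₀ hr₀Ioo
  have hLkφ := Lk_phi_nonpos n k hn hk hε |l| δ (abs_nonneg l) hδ.le hr₀pos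
  have hderivV : deriv V r₀ = deriv φ r₀ := by
    have := huderiv r₀ hr₀Ioo
    rw [hderiv_u_r₀] at this
    linarith
  have hq : 0 < (k:ℝ) * ((k:ℝ) + (n:ℝ) - 3) / r₀ ^ 2 := by
    have hn' : (3:ℝ) ≤ n := by exact_mod_cast hn
    have hk' : (1:ℝ) ≤ k := by exact_mod_cast hk
    have : (0:ℝ) < (k:ℝ) * ((k:ℝ) + (n:ℝ) - 3) := by nlinarith
    positivity
  have hVsplit : V r₀ = u r₀ + φ r₀ := by simp [hudef]
  have hLkVeq : Lk n k ε V r₀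
      = (deriv (deriv u) r₀ - (k:ℝ) * ((k:ℝ) + (n:ℝ) - 3) / r₀ ^ 2 * u r₀)
        + Lk n k ε φ r₀ := by
    show deriv (deriv V) r₀ + (((n:ℝ) - 2) / r₀ + 2 * r₀ / (ε + r₀ ^ 2)) * deriv V r₀
      - (k:ℝ) * ((k:ℝ) + (n:ℝ) - 3) / r₀ ^ 2 * V r₀ = _
    show _ = (deriv (deriv u) r₀ - (k:ℝ) * ((k:ℝ) + (n:ℝ) - 3) / r₀ ^ 2 * u r₀)
      + (deriv (deriv φ) r₀ + (((n:ℝ) - 2) / r₀ + 2 * r₀ / (ε + r₀ ^ 2)) * deriv φ r₀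
        - (k:ℝ) * ((k:ℝ) + (n:ℝ) - 3) / r₀ ^ 2 * φ r₀)
    rw [hVsplit, hderivV]
    rw [hderiv2_split]
    ring
  rw [hLkVeq] at hLkV
  have hqu : 0 < (k:ℝ) * ((k:ℝ) + (n:ℝ) - 3) / r₀ ^ 2 * u r₀ := mul_pos hq hur₀
  have hLkφ' : Lk n k ε φ r₀ ≤ 0 := hLkφ
  linarith

theorem maximum_principle_decay (n k : ℕ) (hn : 3 ≤ n) (hk : 1 ≤ k) (ε : ℝ) (hε : 0 < ε)
    (V : ℝ → ℝ) (hV2 : ContDiffOn ℝ 2 V (Set.Ioo 0 1))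
    (hbdd : ∃ M : ℝ, ∀ r ∈ Set.Ioo (0 : ℝ) 1, |V r| ≤ M)
    (hLk : ∀ r ∈ Set.Ioo (0 : ℝ) 1, Lk n k ε V r = 0)
    (l : ℝ) (hlim : Filter.Tendsto V (nhdsWithin 1 (Set.Iio 1)) (nhds l)) :
    ∀ r ∈ Set.Ioo (0 : ℝ) 1, |V r| ≤ r ^ alphak n k * |l| := by
  obtain ⟨M, hM⟩ := hbdd
  intro r hr
  set α := alphak n k with hαdef
  -- the negated function satisfies the same hypotheses
  have hderiv_neg : deriv (fun x => -V x) = fun x => -deriv V x := funext fun x => deriv.neg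
  have hLkneg : ∀ x ∈ Set.Ioo (0:ℝ) 1, Lk n k ε (fun y => -V y) x = 0 := by
    intro x hx
    have h0 := hLk x hx
    unfold Lk at h0 ⊢
    rw [hderiv_neg]
    have h2 : deriv (fun x => -deriv V x) x = -(deriv (deriv V) x) := deriv.neg
    rw [h2]
    show -deriv (deriv V) x + (((n:ℝ) - 2) / x + 2 * x / (ε + x ^ 2)) * (-deriv V x)
      - (k:ℝ) * ((k:ℝ) + (n:ℝ) - 3) / x ^ 2 * (-V x) = 0
    linear_combination (-1 : ℝ) * h0
  have hMneg : ∀ x ∈ Set.Ioo (0:ℝ) 1, |(fun y => -V y) x| ≤ M := by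
    intro x hx; simpa using hM x hx
  have hlimneg : Filter.Tendsto (fun y => -V y) (nhdsWithin 1 (Set.Iio 1)) (nhds (-l)) :=
    hlim.neg
  have hall : ∀ δ : ℝ, 0 < δ → |V r| ≤ |l| * r ^ α + δ := by
    intro δ hδ
    have hδ' : 0 < δ * r := mul_pos hδ hr.1
    have h1 := one_sided n k hn hk hε V hV2 M hM hLk l hlim (δ * r) hδ' r hr
    have h2 := one_sided n k hn hk hε (fun y => -V y) hV2.neg M hMneg hLkneg (-l) hlimneg
      (δ * r) hδ' r hr
    rw [abs_neg] at h2
    have e : δ * r * r ^ (-1:ℝ) = δ := by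
      rw [Real.rpow_neg hr.1.le, Real.rpow_one, mul_assoc, mul_inv_cancel₀ hr.1.ne', mul_one]
    rw [e] at h1 h2
    rw [abs_le]
    constructor
    · linarith
    · linarith
  have : |V r| ≤ |l| * r ^ α := by
    by_contra h
    push_neg at h
    have := hall ((|V r| - |l| * r ^ α) / 2) (by linarith)
    linarith
  linarith [this, mul_comm (|l|) (r ^ α)]
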